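/- arXiv:1110.0966 — 2 statements merged into one kernel-verified Lean document; each statement's English description precedes it below -/
import Mathlib

section
/- Assume that ⋂_{m∈ℕ} Φ^m(A) = {0} and let w be a positive integer. Then the following four statements are equivalent: (i) the digit set D is w-subadditive; (ii) for every multi-expansion μ there is a w-NAF-expansion ξ with the same value and with weight(ξ) ≤ weight(μ); (iii) for all w-NAF-expansions η and θ there is a w-NAF-expansion ξ with value(ξ) = value(η) + value(θ) and weight(ξ) ≤ weight(η) + weight(θ); (iv) every z ∈ A that is the value of some multi-expansion is also the value of an optimal w-NAF-expansion. -/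
/-- A multi-expansion over the digit set `D`: a finite multiset of pairs `(d, n)`
with `d ∈ D` nonzero. -/
def IsMultiExpansion {A : Type*} [AddCommGroup A] (D : Finset A)
    (μ : Multiset (A × ℕ)) : Prop :=
  ∀ x ∈ μ, x.1 ∈ D ∧ x.1 ≠ 0

/-- The value of a multi-expansion: `∑ Φ^n(d)`. -/
def mvalue {A : Type*} [AddCommGroup A] (Φ : AddMonoid.End A)
    (μ : Multiset (A × ℕ)) : A :=
  (μ.map fun x => (Φ ^ x.2) x.1).sum

/-- An expansion: a finitely supported sequence of digits. -/
def IsExpansion {A : Type*} [AddCommGroup A] (D : Finset A) (η : ℕ →₀ A) : Prop :=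
  ∀ n, η n ∈ D

/-- The `w`-NAF condition: any two distinct nonzero digits have indices at
distance at least `w`. -/
def IsWNAF {A : Type*} [AddCommGroup A] (w : ℕ) (η : ℕ →₀ A) : Prop :=
  ∀ m n : ℕ, m ≠ n → η m ≠ 0 → η n ≠ 0 → (w : ℤ) ≤ |(m : ℤ) - (n : ℤ)|

/-- The value of an expansion: `∑ Φ^n(η_n)`. -/
def evalue {A : Type*} [AddCommGroup A] (Φ : AddMonoid.End A) (η : ℕ →₀ A) : A :=
  η.sum fun n d => (Φ ^ n) d

/-- The weight of an expansion: the number of nonzero digits. -/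
def eweight {A : Type*} [AddCommGroup A] (η : ℕ →₀ A) : ℕ :=
  η.support.card

/-- The digit set `D` is `w`-subadditive: the sum of the values of two
singletons has a `w`-NAF-expansion of weight at most `2`. -/
def WSubadditive {A : Type*} [AddCommGroup A] (Φ : AddMonoid.End A)
    (D : Finset A) (w : ℕ) : Prop :=
  ∀ c ∈ D, ∀ d ∈ D, c ≠ 0 → d ≠ 0 → ∀ m n : ℕ,
    ∃ η : ℕ →₀ A, IsExpansion D η ∧ IsWNAF w η ∧
      evalue Φ η = (Φ ^ m) c + (Φ ^ n) d ∧ eweight η ≤ 2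

/-!
Read a multi-expansion upwards from a floor `ℓ` below all of its indices and look at the window
`[ℓ, ℓ + w)`. Two digits in the window are replaced, by `w`-subadditivity, by a `w`-NAF of weight
at most `2` starting at `ℓ`; it has at most one digit in the window, so the number of digits there
drops. A lone digit at `ℓ` is split off, and the rest, lying above `ℓ + w`, is handled by induction
on the weight. Otherwise the floor moves up. A nonzero value lies outside some `Φ^F(A)` because
`⋂ Φ^m(A) = {0}`, so the floor stays below `F` and the process terminates.
-/

lemma Multiset.exists_eq_cons_cons_of_two_le_card_filter {α : Type*} {p : α → Prop}
    [DecidablePred p] {s : Multiset α} (h : 2 ≤ Multiset.card (s.filter p)) :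
    ∃ a b t, s = a ::ₘ b ::ₘ t ∧ p a ∧ p b := by
  obtain ⟨a, ha⟩ := Multiset.card_pos_iff_exists_mem.1 (by omega : 0 < Multiset.card (s.filter p))
  rw [Multiset.mem_filter] at ha
  obtain ⟨s, rfl⟩ := Multiset.exists_cons_of_mem ha.1
  rw [Multiset.filter_cons_of_pos _ ha.2, Multiset.card_cons] at h
  obtain ⟨b, hb⟩ := Multiset.card_pos_iff_exists_mem.1 (by omega : 0 < Multiset.card (s.filter p))
  rw [Multiset.mem_filter] at hb
  obtain ⟨t, rfl⟩ := Multiset.exists_cons_of_mem hb.1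
  exact ⟨a, b, t, rfl, ha.2, hb.2⟩

section

variable {A : Type*} [AddCommGroup A] {Φ : AddMonoid.End A} {D : Finset A} {w : ℕ}

lemma AddMonoid.End.pow_add_apply (Φ : AddMonoid.End A) (i j : ℕ) (x : A) :
    (Φ ^ (i + j)) x = (Φ ^ i) ((Φ ^ j) x) := by
  rw [pow_add]; rfl

@[simp] lemma mvalue_zero : mvalue Φ (0 : Multiset (A × ℕ)) = 0 := by simp [mvalue]

@[simp] lemma mvalue_cons (x : A × ℕ) (μ : Multiset (A × ℕ)) :
    mvalue Φ (x ::ₘ μ) = (Φ ^ x.2) x.1 + mvalue Φ μ := by simp [mvalue]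

@[simp] lemma mvalue_add (μ ν : Multiset (A × ℕ)) :
    mvalue Φ (μ + ν) = mvalue Φ μ + mvalue Φ ν := by simp [mvalue]

lemma mvalue_mem_range_pow {ν : Multiset (A × ℕ)} {ℓ : ℕ} (h : ∀ x ∈ ν, ℓ ≤ x.2) :
    mvalue Φ ν ∈ Set.range (Φ ^ ℓ) := by
  rw [← AddMonoidHom.coe_mrange]
  refine AddSubmonoid.multiset_sum_mem _ _ fun y hy => ?_
  obtain ⟨x, hx, rfl⟩ := Multiset.mem_map.1 hy
  exact ⟨(Φ ^ (x.2 - ℓ)) x.1, by rw [← AddMonoid.End.pow_add_apply, Nat.add_sub_cancel' (h x hx)]⟩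

lemma IsMultiExpansion.add {μ ν : Multiset (A × ℕ)} (hμ : IsMultiExpansion D μ)
    (hν : IsMultiExpansion D ν) : IsMultiExpansion D (μ + ν) :=
  fun x hx => (Multiset.mem_add.1 hx).elim (hμ x) (hν x)

@[simp] lemma evalue_zero : evalue Φ (0 : ℕ →₀ A) = 0 := by simp [evalue]

@[simp] lemma evalue_single (n : ℕ) (d : A) : evalue Φ (Finsupp.single n d) = (Φ ^ n) d :=
  Finsupp.sum_single_index (map_zero _)

@[simp] lemma evalue_add (η θ : ℕ →₀ A) : evalue Φ (η + θ) = evalue Φ η + evalue Φ θ :=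
  Finsupp.sum_add_index' (fun _ => map_zero _) (fun _ => map_add _)

lemma isExpansion_single (h0 : (0 : A) ∈ D) {d : A} (hd : d ∈ D) (n : ℕ) :
    IsExpansion D (Finsupp.single n d) := by
  intro m
  rw [Finsupp.single_apply]
  split_ifs <;> assumption

lemma isWNAF_iff {η : ℕ →₀ A} :
    IsWNAF w η ↔ ∀ m ∈ η.support, ∀ n ∈ η.support, m ≠ n → (w : ℤ) ≤ |(m : ℤ) - n| := by
  simp only [IsWNAF, Finsupp.mem_support_iff]
  exact ⟨fun h m hm n hn hmn => h m n hmn hm hn, fun h m n hmn hm hn => h m hm n hn hmn⟩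

lemma isWNAF_single (n : ℕ) (d : A) : IsWNAF w (Finsupp.single n d) := by
  refine isWNAF_iff.2 fun m hm k hk hmk => absurd ?_ hmk
  rw [Finset.mem_singleton.1 (Finsupp.support_single_subset hm),
    Finset.mem_singleton.1 (Finsupp.support_single_subset hk)]

lemma eweight_single_le_one (n : ℕ) (d : A) : eweight (Finsupp.single n d) ≤ 1 :=
  (Finset.card_le_card Finsupp.support_single_subset).trans (Finset.card_singleton n).le

lemma IsWNAF.card_filter_lt_add_le_one {η : ℕ →₀ A} (h : IsWNAF w η) {s : ℕ}
    (hs : ∀ n ∈ η.support, s ≤ n) : (η.support.filter (· < s + w)).card ≤ 1 := by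
  refine Finset.card_le_one.2 fun m hm n hn => by_contra fun hmn => ?_
  rw [Finset.mem_filter] at hm hn
  have hdist := isWNAF_iff.1 h m hm.1 n hn.1 hmn
  have hm' := hs m hm.1
  have hn' := hs n hn.1
  have hlt : |(m : ℤ) - n| < w := abs_sub_lt_iff.2 ⟨by omega, by omega⟩
  omega

section Shift

noncomputable def shiftUp (s : ℕ) (η : ℕ →₀ A) : ℕ →₀ A :=
  η.embDomain (addRightEmbedding s)

variable {s : ℕ} {η : ℕ →₀ A}

lemma shiftUp_apply_add (n : ℕ) : shiftUp s η (n + s) = η n :=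
  Finsupp.embDomain_apply_self _ _ _

lemma support_shiftUp : (shiftUp s η).support = η.support.map (addRightEmbedding s) :=
  Finsupp.support_embDomain _ _

lemma eweight_shiftUp : eweight (shiftUp s η) = eweight η := by
  simp [eweight, support_shiftUp]

lemma evalue_shiftUp : evalue Φ (shiftUp s η) = (Φ ^ s) (evalue Φ η) := by
  rw [shiftUp, evalue, Finsupp.sum_embDomain, evalue, map_finsuppSum]
  refine Finsupp.sum_congr fun n _ => ?_
  rw [addRightEmbedding_apply, add_comm, AddMonoid.End.pow_add_apply]

lemma mem_support_shiftUp {n : ℕ} : n ∈ (shiftUp s η).support ↔ ∃ m ∈ η.support, m + s = n := by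
  simp [support_shiftUp]

lemma le_of_mem_support_shiftUp {n : ℕ} (hn : n ∈ (shiftUp s η).support) : s ≤ n := by
  obtain ⟨m, -, rfl⟩ := mem_support_shiftUp.1 hn
  exact Nat.le_add_left s m

lemma isExpansion_shiftUp (h0 : (0 : A) ∈ D) (h : IsExpansion D η) :
    IsExpansion D (shiftUp s η) := by
  intro n
  by_cases hn : n ∈ (shiftUp s η).support
  · obtain ⟨m, -, rfl⟩ := mem_support_shiftUp.1 hn
    rw [shiftUp_apply_add]
    exact h m
  · rw [Finsupp.notMem_support_iff.1 hn]
    exact h0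

lemma isWNAF_shiftUp (h : IsWNAF w η) : IsWNAF w (shiftUp s η) := by
  refine isWNAF_iff.2 fun m hm n hn hmn => ?_
  obtain ⟨m, hm', rfl⟩ := mem_support_shiftUp.1 hm
  obtain ⟨n, hn', rfl⟩ := mem_support_shiftUp.1 hn
  simp only [Nat.cast_add, add_sub_add_right_eq_sub] at hmn ⊢
  exact isWNAF_iff.1 h m hm' n hn' fun h => hmn (h ▸ rfl)

end Shift

def HasWNAF (Φ : AddMonoid.End A) (D : Finset A) (w : ℕ) (z : A) (k : ℕ) : Prop :=
  ∃ η : ℕ →₀ A, IsExpansion D η ∧ IsWNAF w η ∧ evalue Φ η = z ∧ eweight η ≤ k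

def HasWNAFAbove (Φ : AddMonoid.End A) (D : Finset A) (w s : ℕ) (z : A) (k : ℕ) : Prop :=
  ∃ η : ℕ →₀ A, IsExpansion D η ∧ IsWNAF w η ∧ (∀ n ∈ η.support, s ≤ n) ∧
    evalue Φ η = z ∧ eweight η ≤ k

section WNAFAbove

variable {s k : ℕ} {z : A}

lemma HasWNAFAbove.hasWNAF (h : HasWNAFAbove Φ D w s z k) : HasWNAF Φ D w z k :=
  let ⟨η, hη, hηw, _, hηv, hηk⟩ := h
  ⟨η, hη, hηw, hηv, hηk⟩

lemma HasWNAFAbove.mono {s' k' : ℕ} (h : HasWNAFAbove Φ D w s z k) (hs : s' ≤ s)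
    (hk : k ≤ k') : HasWNAFAbove Φ D w s' z k' :=
  let ⟨η, hη, hηw, hηs, hηv, hηk⟩ := h
  ⟨η, hη, hηw, fun n hn => hs.trans (hηs n hn), hηv, hηk.trans hk⟩

lemma hasWNAFAbove_zero (h0 : (0 : A) ∈ D) : HasWNAFAbove Φ D w s 0 k :=
  ⟨0, fun _ => h0, isWNAF_iff.2 (by simp), by simp, evalue_zero, by simp [eweight]⟩

lemma HasWNAF.hasWNAFAbove_pow_apply (h0 : (0 : A) ∈ D) (h : HasWNAF Φ D w z k) (s : ℕ) :
    HasWNAFAbove Φ D w s ((Φ ^ s) z) k :=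
  let ⟨η, hη, hηw, hηv, hηk⟩ := h
  ⟨shiftUp s η, isExpansion_shiftUp h0 hη, isWNAF_shiftUp hηw, fun _ => le_of_mem_support_shiftUp,
    by rw [evalue_shiftUp, hηv], eweight_shiftUp.trans_le hηk⟩

lemma HasWNAFAbove.single_add (hw : 0 < w) (h : HasWNAFAbove Φ D w (s + w) z k) {d : A}
    (hd : d ∈ D) : HasWNAFAbove Φ D w s ((Φ ^ s) d + z) (k + 1) := by
  classical
  obtain ⟨ξ, hξ, hξw, hξs, rfl, hξk⟩ := h
  have hsξ : ξ s = 0 := Finsupp.notMem_support_iff.1 fun hs => by have := hξs s hs; omega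
  have hsupp : (Finsupp.single s d + ξ).support ⊆ insert s ξ.support :=
    Finsupp.support_add.trans (Finset.union_subset_union_left Finsupp.support_single_subset)
  refine ⟨Finsupp.single s d + ξ, fun n => ?_, isWNAF_iff.2 fun m hm n hn hmn => ?_,
    fun n hn => ?_, by simp, ?_⟩
  · rcases eq_or_ne n s with rfl | hn
    · simpa [hsξ] using hd
    · simpa [Finsupp.single_eq_of_ne' hn.symm] using hξ n
  · rcases Finset.mem_insert.1 (hsupp hm) with rfl | hmξ <;>
      rcases Finset.mem_insert.1 (hsupp hn) with rfl | hnξ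
    · exact absurd rfl hmn
    · exact le_abs.2 (.inr (by have := hξs n hnξ; omega))
    · exact le_abs.2 (.inl (by have := hξs m hmξ; omega))
    · exact isWNAF_iff.1 hξw m hmξ n hnξ hmn
  · rcases Finset.mem_insert.1 (hsupp hn) with rfl | hnξ
    · exact le_rfl
    · have := hξs n hnξ; omega
  · exact (Finset.card_le_card hsupp).trans ((Finset.card_insert_le _ _).trans (by
      simpa [eweight] using hξk))

lemma WSubadditive.hasWNAFAbove (hsub : WSubadditive Φ D w) (h0 : (0 : A) ∈ D) {c d : A}
    (hc : c ∈ D) (hd : d ∈ D) (hc0 : c ≠ 0) (hd0 : d ≠ 0) {m n : ℕ} (hm : s ≤ m) (hn : s ≤ n) :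
    HasWNAFAbove Φ D w s ((Φ ^ m) c + (Φ ^ n) d) 2 := by
  have h := HasWNAF.hasWNAFAbove_pow_apply h0 (hsub c hc d hd hc0 hd0 (m - s) (n - s)) s
  rwa [map_add, ← AddMonoid.End.pow_add_apply, ← AddMonoid.End.pow_add_apply,
    Nat.add_sub_cancel' hm, Nat.add_sub_cancel' hn] at h

end WNAFAbove

section MultiExpansionOfExpansion

def toMultiExpansion (η : ℕ →₀ A) : Multiset (A × ℕ) :=
  η.support.val.map fun n => (η n, n)

variable {η : ℕ →₀ A}

lemma mem_toMultiExpansion {x : A × ℕ} :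
    x ∈ toMultiExpansion η ↔ x.2 ∈ η.support ∧ x.1 = η x.2 := by
  constructor
  · intro hx
    obtain ⟨n, hn, rfl⟩ := Multiset.mem_map.1 hx
    exact ⟨hn, rfl⟩
  · rintro ⟨hn, hx⟩
    exact Multiset.mem_map.2 ⟨x.2, hn, Prod.ext hx.symm rfl⟩

lemma card_toMultiExpansion : Multiset.card (toMultiExpansion η) = eweight η :=
  Multiset.card_map _ _

lemma mvalue_toMultiExpansion : mvalue Φ (toMultiExpansion η) = evalue Φ η := by
  rw [mvalue, toMultiExpansion, Multiset.map_map]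
  rfl

lemma card_filter_toMultiExpansion (p : ℕ → Prop) [DecidablePred p] :
    Multiset.card ((toMultiExpansion η).filter fun x => p x.2) = (η.support.filter p).card := by
  rw [toMultiExpansion, Multiset.filter_map, Multiset.card_map]
  rfl

lemma IsExpansion.isMultiExpansion_toMultiExpansion (h : IsExpansion D η) :
    IsMultiExpansion D (toMultiExpansion η) := by
  intro x hx
  obtain ⟨hn, hx⟩ := mem_toMultiExpansion.1 hx
  exact hx ▸ ⟨h x.2, Finsupp.mem_support_iff.1 hn⟩

end MultiExpansionOfExpansion

lemma WSubadditive.exists_merge (hsub : WSubadditive Φ D w) (h0 : (0 : A) ∈ D) {ℓ : ℕ}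
    {ν : Multiset (A × ℕ)} (hν : IsMultiExpansion D ν) (hge : ∀ x ∈ ν, ℓ ≤ x.2)
    (h2 : 2 ≤ Multiset.card (ν.filter fun x => x.2 < ℓ + w)) :
    ∃ ν', IsMultiExpansion D ν' ∧ (∀ x ∈ ν', ℓ ≤ x.2) ∧ mvalue Φ ν' = mvalue Φ ν ∧
      Multiset.card ν' ≤ Multiset.card ν ∧
      Multiset.card (ν'.filter fun x => x.2 < ℓ + w) <
        Multiset.card (ν.filter fun x => x.2 < ℓ + w) := by
  classical
  obtain ⟨a, b, u, rfl, ha, hb⟩ := Multiset.exists_eq_cons_cons_of_two_le_card_filter h2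
  have hau : a ∈ a ::ₘ b ::ₘ u := Multiset.mem_cons_self _ _
  have hbu : b ∈ a ::ₘ b ::ₘ u := Multiset.mem_cons_of_mem (Multiset.mem_cons_self _ _)
  have huu : ∀ x ∈ u, x ∈ a ::ₘ b ::ₘ u :=
    fun x hx => Multiset.mem_cons_of_mem (Multiset.mem_cons_of_mem hx)
  obtain ⟨η, hη, hηw, hηℓ, hηv, hηk⟩ := hsub.hasWNAFAbove h0 (hν a hau).1 (hν b hbu).1
    (hν a hau).2 (hν b hbu).2 (hge a hau) (hge b hbu)
  have hwindow := card_filter_toMultiExpansion (η := η) (· < ℓ + w) ▸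
    hηw.card_filter_lt_add_le_one hηℓ
  refine ⟨toMultiExpansion η + u, hη.isMultiExpansion_toMultiExpansion.add
    fun x hx => hν x (huu x hx), fun x hx => ?_, ?_, ?_, ?_⟩
  · rcases Multiset.mem_add.1 hx with hx | hx
    · exact hηℓ _ (mem_toMultiExpansion.1 hx).1
    · exact hge x (huu x hx)
  · simp [mvalue_toMultiExpansion, hηv, add_assoc]
  · simp only [Multiset.card_add, card_toMultiExpansion, Multiset.card_cons]
    omega
  · rw [Multiset.filter_add, Multiset.card_add,
      Multiset.filter_cons_of_pos (p := fun x : A × ℕ => x.2 < ℓ + w) _ ha,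
      Multiset.filter_cons_of_pos (p := fun x : A × ℕ => x.2 < ℓ + w) _ hb,
      Multiset.card_cons, Multiset.card_cons]
    omega

lemma WSubadditive.hasWNAFAbove_of_notMem_range (hsub : WSubadditive Φ D w) (h0 : (0 : A) ∈ D)
    (hw : 0 < w) {F ℓ : ℕ} {ν : Multiset (A × ℕ)}
    (IH : ∀ μ, IsMultiExpansion D μ → Multiset.card μ < Multiset.card ν → ∀ s,
      (∀ x ∈ μ, s ≤ x.2) → HasWNAFAbove Φ D w s (mvalue Φ μ) (Multiset.card μ))
    (hν : IsMultiExpansion D ν) (hge : ∀ x ∈ ν, ℓ ≤ x.2) (hF : mvalue Φ ν ∉ Set.range (Φ ^ F)) :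
    HasWNAFAbove Φ D w ℓ (mvalue Φ ν) (Multiset.card ν) := by
  by_cases h2 : 2 ≤ Multiset.card (ν.filter fun x => x.2 < ℓ + w)
  · obtain ⟨ν', hν', hge', hval, hcard, _⟩ := hsub.exists_merge h0 hν hge h2
    rw [← hval] at hF ⊢
    exact (hsub.hasWNAFAbove_of_notMem_range (ν := ν') h0 hw
      (fun μ hμ hlt => IH μ hμ (hlt.trans_le hcard)) hν' hge' hF).mono le_rfl hcard
  by_cases hℓ : ∃ a ∈ ν, a.2 = ℓ
  · obtain ⟨a, ha, rfl⟩ := hℓ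
    obtain ⟨u, rfl⟩ := Multiset.exists_cons_of_mem ha
    have hu : ∀ x ∈ u, a.2 + w ≤ x.2 := by
      rw [Multiset.filter_cons_of_pos (p := fun x : A × ℕ => x.2 < a.2 + w) _ (by omega),
        Multiset.card_cons] at h2
      intro x hx
      have := Multiset.filter_eq_nil.1 (Multiset.card_eq_zero.1
        (by omega : Multiset.card (u.filter fun x => x.2 < a.2 + w) = 0)) x hx
      omega
    have := (IH u (fun x hx => hν x (Multiset.mem_cons_of_mem hx)) (by simp) _ hu).single_add hw
      (hν a ha).1
    simpa using this
  · have hℓF : ℓ < F := lt_of_not_ge fun hFℓ =>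
      hF (mvalue_mem_range_pow fun x hx => hFℓ.trans (hge x hx))
    have hge' : ∀ x ∈ ν, ℓ + 1 ≤ x.2 :=
      fun x hx => lt_of_le_of_ne (hge x hx) fun h => hℓ ⟨x, hx, h.symm⟩
    exact (hsub.hasWNAFAbove_of_notMem_range h0 hw IH hν hge' hF).mono (Nat.le_succ ℓ) le_rfl
termination_by (F - ℓ, Multiset.card (ν.filter fun x => x.2 < ℓ + w))
decreasing_by
  · exact Prod.Lex.right _ ‹_›
  · exact Prod.Lex.left _ _ (by omega)

lemma WSubadditive.hasWNAFAbove_mvalue (hsub : WSubadditive Φ D w) (h0 : (0 : A) ∈ D)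
    (hInt : (⋂ m : ℕ, Set.range (Φ ^ m : AddMonoid.End A)) = {0}) (hw : 0 < w)
    (μ : Multiset (A × ℕ)) (hμ : IsMultiExpansion D μ) (s : ℕ) (hs : ∀ x ∈ μ, s ≤ x.2) :
    HasWNAFAbove Φ D w s (mvalue Φ μ) (Multiset.card μ) := by
  by_cases hz : mvalue Φ μ = 0
  · exact hz ▸ hasWNAFAbove_zero h0
  obtain ⟨F, hF⟩ : ∃ F : ℕ, mvalue Φ μ ∉ Set.range ⇑(Φ ^ F) := by
    by_contra! h
    have : mvalue Φ μ ∈ ⋂ m : ℕ, Set.range (Φ ^ m : AddMonoid.End A) := Set.mem_iInter.2 h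
    rw [hInt] at this
    exact hz this
  exact hsub.hasWNAFAbove_of_notMem_range h0 hw
    (fun μ' hμ' _ s' hs' => hsub.hasWNAFAbove_mvalue h0 hInt hw μ' hμ' s' hs') hμ hs hF
termination_by Multiset.card μ

lemma WSubadditive.hasWNAF_mvalue (hsub : WSubadditive Φ D w) (h0 : (0 : A) ∈ D)
    (hInt : (⋂ m : ℕ, Set.range (Φ ^ m : AddMonoid.End A)) = {0}) (hw : 0 < w)
    (μ : Multiset (A × ℕ)) (hμ : IsMultiExpansion D μ) :
    HasWNAF Φ D w (mvalue Φ μ) (Multiset.card μ) :=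
  (hsub.hasWNAFAbove_mvalue h0 hInt hw μ hμ 0 fun _ _ => Nat.zero_le _).hasWNAF

lemma wSubadditive_of_hasWNAF_mvalue
    (h : ∀ μ, IsMultiExpansion D μ → HasWNAF Φ D w (mvalue Φ μ) (Multiset.card μ)) :
    WSubadditive Φ D w := by
  intro c hc d hd hc0 hd0 m n
  have := h ((c, m) ::ₘ (d, n) ::ₘ 0) (by simp [IsMultiExpansion, *])
  simp only [mvalue_cons, mvalue_zero, add_zero, Multiset.card_cons, Multiset.card_zero,
    zero_add, Nat.reduceAdd] at this
  exact this

lemma hasWNAF_evalue_add_of_hasWNAF_mvalue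
    (h : ∀ μ, IsMultiExpansion D μ → HasWNAF Φ D w (mvalue Φ μ) (Multiset.card μ))
    {η θ : ℕ →₀ A} (hη : IsExpansion D η) (hθ : IsExpansion D θ) :
    HasWNAF Φ D w (evalue Φ η + evalue Φ θ) (eweight η + eweight θ) := by
  simpa [mvalue_toMultiExpansion, card_toMultiExpansion] using
    h _ (hη.isMultiExpansion_toMultiExpansion.add hθ.isMultiExpansion_toMultiExpansion)

lemma hasWNAF_mvalue_of_hasWNAF_evalue_add (h0 : (0 : A) ∈ D)
    (h : ∀ η θ : ℕ →₀ A, IsExpansion D η → IsWNAF w η → IsExpansion D θ → IsWNAF w θ →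
      HasWNAF Φ D w (evalue Φ η + evalue Φ θ) (eweight η + eweight θ))
    (μ : Multiset (A × ℕ)) (hμ : IsMultiExpansion D μ) :
    HasWNAF Φ D w (mvalue Φ μ) (Multiset.card μ) := by
  induction μ using Multiset.induction_on with
  | empty =>
    rw [mvalue_zero, Multiset.card_zero]
    exact (hasWNAFAbove_zero (s := 0) h0).hasWNAF
  | cons x μ ih =>
    obtain ⟨η, hη, hηw, hηv, hηk⟩ := ih fun y hy => hμ y (Multiset.mem_cons_of_mem hy)
    obtain ⟨ξ, hξ, hξw, hξv, hξk⟩ := h _ η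
      (isExpansion_single h0 (hμ x (Multiset.mem_cons_self _ _)).1 x.2) (isWNAF_single _ _) hη hηw
    refine ⟨ξ, hξ, hξw, by simp [hξv, hηv], ?_⟩
    have := eweight_single_le_one x.2 x.1
    rw [Multiset.card_cons]
    omega

lemma exists_optimal_of_hasWNAF_mvalue
    (h : ∀ μ, IsMultiExpansion D μ → HasWNAF Φ D w (mvalue Φ μ) (Multiset.card μ)) (z : A)
    (hz : ∃ μ : Multiset (A × ℕ), IsMultiExpansion D μ ∧ mvalue Φ μ = z) :
    ∃ η : ℕ →₀ A, IsExpansion D η ∧ IsWNAF w η ∧ evalue Φ η = z ∧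
      ∀ μ : Multiset (A × ℕ), IsMultiExpansion D μ → mvalue Φ μ = z →
        eweight η ≤ Multiset.card μ := by
  obtain ⟨μ₀, ⟨hμ₀, rfl⟩, hmin⟩ := (measure fun μ : Multiset (A × ℕ) => Multiset.card μ).wf.has_min
    {μ | IsMultiExpansion D μ ∧ mvalue Φ μ = z} hz
  obtain ⟨η, hη, hηw, hηv, hηk⟩ := h μ₀ hμ₀
  exact ⟨η, hη, hηw, hηv, fun μ hμ hv => hηk.trans (not_lt.1 (hmin μ ⟨hμ, hv⟩))⟩

lemma hasWNAF_mvalue_of_exists_optimal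
    (h : ∀ z : A, (∃ μ : Multiset (A × ℕ), IsMultiExpansion D μ ∧ mvalue Φ μ = z) →
      ∃ η : ℕ →₀ A, IsExpansion D η ∧ IsWNAF w η ∧ evalue Φ η = z ∧
        ∀ μ : Multiset (A × ℕ), IsMultiExpansion D μ → mvalue Φ μ = z →
          eweight η ≤ Multiset.card μ)
    (μ : Multiset (A × ℕ)) (hμ : IsMultiExpansion D μ) :
    HasWNAF Φ D w (mvalue Φ μ) (Multiset.card μ) :=
  let ⟨η, hη, hηw, hηv, hopt⟩ := h _ ⟨μ, hμ, rfl⟩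
  ⟨η, hη, hηw, hηv, hopt μ hμ rfl⟩

end

theorem optimality_theorem_general {A : Type*} [AddCommGroup A] (Φ : AddMonoid.End A)
    (D : Finset A) (h0 : (0 : A) ∈ D)
    (hInt : (⋂ m : ℕ, Set.range (Φ ^ m : AddMonoid.End A)) = {0})
    (w : ℕ) (hw : 0 < w) :
    (WSubadditive Φ D w ↔
      (∀ μ : Multiset (A × ℕ), IsMultiExpansion D μ →
        ∃ η : ℕ →₀ A, IsExpansion D η ∧ IsWNAF w η ∧
          evalue Φ η = mvalue Φ μ ∧ eweight η ≤ Multiset.card μ))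
    ∧
    ((∀ μ : Multiset (A × ℕ), IsMultiExpansion D μ →
        ∃ η : ℕ →₀ A, IsExpansion D η ∧ IsWNAF w η ∧
          evalue Φ η = mvalue Φ μ ∧ eweight η ≤ Multiset.card μ) ↔
      (∀ η θ : ℕ →₀ A, IsExpansion D η → IsWNAF w η →
        IsExpansion D θ → IsWNAF w θ →
        ∃ ξ : ℕ →₀ A, IsExpansion D ξ ∧ IsWNAF w ξ ∧
          evalue Φ ξ = evalue Φ η + evalue Φ θ ∧
          eweight ξ ≤ eweight η + eweight θ))
    ∧
    ((∀ η θ : ℕ →₀ A, IsExpansion D η → IsWNAF w η →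
        IsExpansion D θ → IsWNAF w θ →
        ∃ ξ : ℕ →₀ A, IsExpansion D ξ ∧ IsWNAF w ξ ∧
          evalue Φ ξ = evalue Φ η + evalue Φ θ ∧
          eweight ξ ≤ eweight η + eweight θ) ↔
      (∀ z : A, (∃ μ : Multiset (A × ℕ), IsMultiExpansion D μ ∧ mvalue Φ μ = z) →
        ∃ η : ℕ →₀ A, IsExpansion D η ∧ IsWNAF w η ∧ evalue Φ η = z ∧
          ∀ μ : Multiset (A × ℕ), IsMultiExpansion D μ → mvalue Φ μ = z →
            eweight η ≤ Multiset.card μ)) := by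
  have ii_iii (h : ∀ μ, IsMultiExpansion D μ → HasWNAF Φ D w (mvalue Φ μ) (Multiset.card μ))
      (η θ : ℕ →₀ A) (hη : IsExpansion D η) (_ : IsWNAF w η) (hθ : IsExpansion D θ)
      (_ : IsWNAF w θ) : HasWNAF Φ D w (evalue Φ η + evalue Φ θ) (eweight η + eweight θ) :=
    hasWNAF_evalue_add_of_hasWNAF_mvalue h hη hθ
  have iii_ii := hasWNAF_mvalue_of_hasWNAF_evalue_add (Φ := Φ) (w := w) h0
  exact ⟨⟨fun hsub => hsub.hasWNAF_mvalue h0 hInt hw, wSubadditive_of_hasWNAF_mvalue⟩,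
    ⟨ii_iii, iii_ii⟩,
    ⟨fun h => exists_optimal_of_hasWNAF_mvalue (iii_ii h),
      fun h => ii_iii (hasWNAF_mvalue_of_exists_optimal h)⟩⟩

/-- The Optimality Theorem: the four statements (w-subadditivity; every
multi-expansion can be replaced by a w-NAF-expansion of no larger weight;
sums of two w-NAF-expansions have w-NAF-expansions of no larger weight;
every element with a multi-expansion has an optimal w-NAF-expansion)
are equivalent. -/
theorem optimality_theorem {A : Type*} [AddCommGroup A] (Φ : AddMonoid.End A)
    (D : Finset A) (h0 : (0 : A) ∈ D)
    (hD : ∀ d ∈ D, d ≠ 0 → d ∉ Set.range Φ)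
    (hInt : (⋂ m : ℕ, Set.range (Φ ^ m : AddMonoid.End A)) = {0})
    (w : ℕ) (hw : 0 < w) :
    (WSubadditive Φ D w ↔
      (∀ μ : Multiset (A × ℕ), IsMultiExpansion D μ →
        ∃ η : ℕ →₀ A, IsExpansion D η ∧ IsWNAF w η ∧
          evalue Φ η = mvalue Φ μ ∧ eweight η ≤ Multiset.card μ))
    ∧
    ((∀ μ : Multiset (A × ℕ), IsMultiExpansion D μ →
        ∃ η : ℕ →₀ A, IsExpansion D η ∧ IsWNAF w η ∧
          evalue Φ η = mvalue Φ μ ∧ eweight η ≤ Multiset.card μ) ↔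
      (∀ η θ : ℕ →₀ A, IsExpansion D η → IsWNAF w η →
        IsExpansion D θ → IsWNAF w θ →
        ∃ ξ : ℕ →₀ A, IsExpansion D ξ ∧ IsWNAF w ξ ∧
          evalue Φ ξ = evalue Φ η + evalue Φ θ ∧
          eweight ξ ≤ eweight η + eweight θ))
    ∧
    ((∀ η θ : ℕ →₀ A, IsExpansion D η → IsWNAF w η →
        IsExpansion D θ → IsWNAF w θ →
        ∃ ξ : ℕ →₀ A, IsExpansion D ξ ∧ IsWNAF w ξ ∧
          evalue Φ ξ = evalue Φ η + evalue Φ θ ∧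
          eweight ξ ≤ eweight η + eweight θ) ↔
      (∀ z : A, (∃ μ : Multiset (A × ℕ), IsMultiExpansion D μ ∧ mvalue Φ μ = z) →
        ∃ η : ℕ →₀ A, IsExpansion D η ∧ IsWNAF w η ∧ evalue Φ η = z ∧
          ∀ μ : Multiset (A × ℕ), IsMultiExpansion D μ → mvalue Φ μ = z →
            eweight η ≤ Multiset.card μ)) :=
  optimality_theorem_general Φ D h0 hInt w hw
end

section
/- Let τ = 1 + i, let w ≥ 4 be an even integer, and set A := 2^{w/2−1}·(1 − i), B := A/τ = −2^{w/2−1}·i, and s := −i^{1−w/2} (a power of i, so s ∈ {1, −1, i, −i}). Then: (a) each of 1, i, −1, −i is a minimal norm representative modulo τ^w; (b) A − 1 is a minimal norm representative modulo τ^w; (c) −B − 1 is a minimal norm representative modulo τ^w; (d) i·τ^{w−1} − s^{−1} is a minimal norm representative modulo τ^w; (e) in ℤ[i] the identity (A − 1)·τ^{w−1} + (−s^{−1}) = s·τ^{2w} + (−B − 1)·τ^w + (i·τ^{w−1} − s^{−1}) holds. -/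
open Complex

noncomputable section

/-- The lattice `ℤ[τ] = {a + b·τ : a, b ∈ ℤ}` as a subset of `ℂ`. -/
def Ztau (τ : ℂ) : Set ℂ := {z | ∃ a b : ℤ, z = (a : ℂ) + (b : ℂ) * τ}

/-- `z` is divisible by `τ` in `ℤ[τ]`. -/
def TauDvd (τ : ℂ) (z : ℂ) : Prop := ∃ y ∈ Ztau τ, z = τ * y

/-- `x` is a minimal norm representative modulo `τ^w`: an element of `ℤ[τ]`,
not divisible by `τ`, of minimal norm in its residue class modulo `τ^w`. -/
def MinNormRep (τ : ℂ) (w : ℕ) (x : ℂ) : Prop :=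
  x ∈ Ztau τ ∧ ¬ TauDvd τ x ∧
    ∀ y ∈ Ztau τ, ‖x‖ ≤ ‖x - τ ^ w * y‖

/-- `A = 2^{w/2−1}·(1 − i)`. -/
def A15 (w : ℕ) : ℂ := 2 ^ (w / 2 - 1) * (1 - I)

/-- `B = A/τ` for `τ = 1 + i`. -/
def B15 (w : ℕ) : ℂ := A15 w / (1 + I)

/-- `s = −i^{1−w/2}`. -/
def s15 (w : ℕ) : ℂ := -(I ^ ((1 : ℤ) - (w : ℤ) / 2))

/-!
Since `(1 + i)² = 2i`, we have `τ^{2m} = 2^m i^m`, and `i^m` is a unit of `ℤ[i]`; so reducing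
`p + q i` modulo `τ^{2m}` shifts `p` and `q` independently by multiples of `2^m`. A Gaussian integer
with `|p|, |q| ≤ 2^{m-1}` is therefore already of minimal norm in its class, and it is prime to `τ`
exactly when `p + q` is odd. Every element of the statement is such a point up to a factor `i^k`,
and multiplication by `i` preserves minimal norm representatives. The identity (e) reduces to
`s · i^{w/2} = -i`.
-/

lemma mem_Ztau_one_add_I {z : ℂ} : z ∈ Ztau (1 + I) ↔ ∃ p q : ℤ, z = p + q * I := by
  constructor
  · rintro ⟨a, b, rfl⟩
    exact ⟨a + b, b, by push_cast; ring⟩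
  · rintro ⟨p, q, rfl⟩
    exact ⟨p - q, q, by push_cast; ring⟩

lemma intCast_add_intCast_mul_I_inj {p q p' q' : ℤ} (h : (p : ℂ) + q * I = p' + q' * I) :
    p = p' ∧ q = q' := by
  simpa [Complex.ext_iff] using h

lemma I_mul_mem_Ztau {z : ℂ} (hz : z ∈ Ztau (1 + I)) : I * z ∈ Ztau (1 + I) := by
  obtain ⟨p, q, rfl⟩ := mem_Ztau_one_add_I.1 hz
  exact mem_Ztau_one_add_I.2 ⟨-q, p, by push_cast; linear_combination (q : ℂ) * I_sq⟩

lemma I_pow_mul_mem_Ztau (n : ℕ) {z : ℂ} (hz : z ∈ Ztau (1 + I)) : I ^ n * z ∈ Ztau (1 + I) := by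
  induction n with
  | zero => simpa using hz
  | succ n ih => simpa [pow_succ', mul_assoc] using I_mul_mem_Ztau ih

lemma not_tauDvd_of_odd {p q : ℤ} (hodd : Odd (p + q)) : ¬ TauDvd (1 + I) (p + q * I) := by
  rintro ⟨y, hy, hxy⟩
  obtain ⟨a, b, rfl⟩ := mem_Ztau_one_add_I.1 hy
  obtain ⟨rfl, rfl⟩ := intCast_add_intCast_mul_I_inj (p' := a - b) (q' := a + b) <| by
    rw [hxy]; push_cast; linear_combination (b : ℂ) * I_sq
  exact Int.not_even_iff_odd.2 hodd ⟨a, by ring⟩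

lemma sq_le_sq_sub_mul {p N : ℤ} (h : 2 * |p| ≤ N) (a : ℤ) : p ^ 2 ≤ (p - N * a) ^ 2 := by
  have hN : 0 ≤ N := le_trans (by positivity) h
  rcases lt_trichotomy a 0 with ha | rfl | ha
  · have hNa : N * a ≤ -N := by nlinarith
    have hsub : N * a - 2 * p ≤ 0 := by linarith [neg_abs_le p]
    nlinarith [mul_nonneg_of_nonpos_of_nonpos (hNa.trans (neg_nonpos.2 hN)) hsub]
  · simp
  · have hNa : N ≤ N * a := le_mul_of_one_le_right hN ha
    have hsub : 0 ≤ N * a - 2 * p := by linarith [le_abs_self p]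
    nlinarith [mul_nonneg (hN.trans hNa) hsub]

lemma norm_intCast_add_mul_I_le {p q p' q' : ℤ} (h : p ^ 2 + q ^ 2 ≤ p' ^ 2 + q' ^ 2) :
    ‖(p : ℂ) + q * I‖ ≤ ‖(p' : ℂ) + q' * I‖ := by
  have hnorm (p q : ℤ) : ‖(p : ℂ) + q * I‖ = √((p : ℝ) ^ 2 + (q : ℝ) ^ 2) := by
    simpa using norm_add_mul_I (p : ℝ) q
  rw [hnorm, hnorm]
  exact Real.sqrt_le_sqrt (by exact_mod_cast h)

lemma one_add_I_ne_zero : (1 : ℂ) + I ≠ 0 := by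
  intro h
  simpa using congrArg re h

lemma one_add_I_sq : ((1 : ℂ) + I) ^ 2 = 2 * I := by
  linear_combination I_sq

lemma one_add_I_pow_two_mul (m : ℕ) : ((1 : ℂ) + I) ^ (2 * m) = 2 ^ m * I ^ m := by
  rw [pow_mul, one_add_I_sq, mul_pow]

lemma one_add_I_pow_two_mul_sub_one {m : ℕ} (hm : m ≠ 0) :
    ((1 : ℂ) + I) ^ (2 * m - 1) = 2 ^ (m - 1) * I ^ m * (1 - I) := by
  obtain ⟨k, rfl⟩ : ∃ k, m = k + 1 := ⟨m - 1, by omega⟩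
  rw [show 2 * (k + 1) - 1 = 2 * k + 1 by omega, pow_succ, one_add_I_pow_two_mul,
    Nat.add_sub_cancel, pow_succ]
  linear_combination ((2 : ℂ) ^ k * I ^ k) * I_sq

theorem minNormRep_of_two_mul_abs_le (m : ℕ) {p q : ℤ} (hp : 2 * |p| ≤ 2 ^ m)
    (hq : 2 * |q| ≤ 2 ^ m) (hodd : Odd (p + q)) :
    MinNormRep (1 + I) (2 * m) (p + q * I) := by
  refine ⟨mem_Ztau_one_add_I.2 ⟨p, q, rfl⟩, not_tauDvd_of_odd hodd, fun y hy => ?_⟩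
  obtain ⟨a, b, hab⟩ := mem_Ztau_one_add_I.1 (I_pow_mul_mem_Ztau m hy)
  have hsub : (p : ℂ) + q * I - (1 + I) ^ (2 * m) * y
      = ((p - 2 ^ m * a : ℤ) : ℂ) + ((q - 2 ^ m * b : ℤ) : ℂ) * I := by
    rw [one_add_I_pow_two_mul, mul_assoc, hab]; push_cast; ring
  rw [hsub]
  exact norm_intCast_add_mul_I_le (add_le_add (sq_le_sq_sub_mul hp a) (sq_le_sq_sub_mul hq b))

theorem MinNormRep.I_mul {w : ℕ} {x : ℂ} (hx : MinNormRep (1 + I) w x) :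
    MinNormRep (1 + I) w (I * x) := by
  obtain ⟨hmem, hndvd, hmin⟩ := hx
  refine ⟨I_mul_mem_Ztau hmem, ?_, fun y hy => ?_⟩
  · rintro ⟨y, hy, hxy⟩
    exact hndvd ⟨I ^ 3 * y, I_pow_mul_mem_Ztau 3 hy, by
      linear_combination I ^ 3 * hxy - x * I_pow_four⟩
  · have hrot : I * x - (1 + I) ^ w * y = I * (x - (1 + I) ^ w * (I ^ 3 * y)) := by
      linear_combination ((1 + I) ^ w * y) * I_pow_four
    rw [hrot, norm_mul, norm_mul, norm_I, one_mul, one_mul]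
    exact hmin _ (I_pow_mul_mem_Ztau 3 hy)

theorem MinNormRep.I_pow_mul {w : ℕ} {x : ℂ} (hx : MinNormRep (1 + I) w x) (n : ℕ) :
    MinNormRep (1 + I) w (I ^ n * x) := by
  induction n with
  | zero => simpa using hx
  | succ n ih => simpa [pow_succ', mul_assoc] using ih.I_mul

lemma minNormRep_one {m : ℕ} (hm : m ≠ 0) : MinNormRep (1 + I) (2 * m) 1 := by
  simpa using minNormRep_of_two_mul_abs_le m (p := 1) (q := 0)
    (by simpa using le_self_pow₀ (one_le_two : (1 : ℤ) ≤ 2) hm) (by simp) (by decide)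

lemma minNormRep_two_pow_add {m : ℕ} (hm : m ≠ 0) :
    MinNormRep (1 + I) (2 * m) (2 ^ (m - 1) + (2 ^ (m - 1) - 1) * I) := by
  have hpos : (1 : ℤ) ≤ 2 ^ (m - 1) := one_le_pow₀ one_le_two
  have := minNormRep_of_two_mul_abs_le m (p := 2 ^ (m - 1)) (q := 2 ^ (m - 1) - 1)
    (by rw [← mul_pow_sub_one hm, abs_of_pos (by positivity)])
    (by rw [← mul_pow_sub_one hm, abs_of_nonneg (by linarith)]; linarith)
    ⟨2 ^ (m - 1) - 1, by ring⟩
  exact_mod_cast this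

lemma minNormRep_neg_one_add_two_pow {m : ℕ} (hm : 2 ≤ m) :
    MinNormRep (1 + I) (2 * m) (-1 + 2 ^ (m - 1) * I) := by
  have hm0 : m ≠ 0 := by omega
  have := minNormRep_of_two_mul_abs_le m (p := -1) (q := 2 ^ (m - 1))
    (by simpa using le_self_pow₀ (one_le_two : (1 : ℤ) ≤ 2) hm0)
    (by rw [← mul_pow_sub_one hm0, abs_of_pos (by positivity)])
    (odd_neg_one.add_even (Int.even_pow.2 ⟨even_two, by omega⟩))
  exact_mod_cast this

lemma A15_two_mul (m : ℕ) : A15 (2 * m) = 2 ^ (m - 1) * (1 - I) := by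
  rw [A15, Nat.mul_div_cancel_left m two_pos]

lemma B15_two_mul (m : ℕ) : B15 (2 * m) = -2 ^ (m - 1) * I := by
  rw [B15, A15_two_mul, div_eq_iff one_add_I_ne_zero]
  linear_combination (2 : ℂ) ^ (m - 1) * I_sq

lemma s15_two_mul_mul_I_pow (m : ℕ) : s15 (2 * m) * I ^ m = -I := by
  rw [s15, show ((2 * m : ℕ) : ℤ) / 2 = m by omega, neg_mul, ← zpow_natCast,
    ← zpow_add₀ I_ne_zero, sub_add_cancel, zpow_one]

lemma inv_s15_two_mul (m : ℕ) : (s15 (2 * m))⁻¹ = I ^ m * I :=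
  inv_eq_of_mul_eq_one_right <| by
    rw [← mul_assoc, s15_two_mul_mul_I_pow]; linear_combination -I_sq

/-- The counter-example construction for `τ = 1 + i` and even `w ≥ 4`:
(a)–(d) the listed elements are minimal norm representatives modulo `τ^w`,
(b') `B = −2^{w/2−1}·i`, and (e) the stated identity holds in `ℤ[i]`. -/
theorem nonopt_construction_p2_q2_w_even (w : ℕ) (hw : 4 ≤ w) (hweven : Even w) :
    (MinNormRep (1 + I) w 1 ∧ MinNormRep (1 + I) w I ∧
      MinNormRep (1 + I) w (-1) ∧ MinNormRep (1 + I) w (-I)) ∧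
    MinNormRep (1 + I) w (A15 w - 1) ∧
    MinNormRep (1 + I) w (-(B15 w) - 1) ∧
    MinNormRep (1 + I) w (I * (1 + I) ^ (w - 1) - (s15 w)⁻¹) ∧
    B15 w = -(2 ^ (w / 2 - 1)) * I ∧
    (A15 w - 1) * (1 + I) ^ (w - 1) + (-(s15 w)⁻¹)
      = s15 w * (1 + I) ^ (2 * w) + (-(B15 w) - 1) * (1 + I) ^ w
        + (I * (1 + I) ^ (w - 1) - (s15 w)⁻¹) := by
  obtain ⟨m, rfl⟩ := hweven
  rw [← two_mul] at hw ⊢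
  have hm : m ≠ 0 := by omega
  have hone := minNormRep_one hm
  have hcorner := minNormRep_two_pow_add hm
  have hd : I * (1 + I) ^ (2 * m - 1) - (s15 (2 * m))⁻¹
      = I ^ m * (2 ^ (m - 1) + (2 ^ (m - 1) - 1) * I) := by
    rw [one_add_I_pow_two_mul_sub_one hm, inv_s15_two_mul]
    linear_combination (-(2 : ℂ) ^ (m - 1) * I ^ m) * I_sq
  refine ⟨⟨hone, by simpa using hone.I_pow_mul 1, by simpa using hone.I_pow_mul 2,
      by simpa using hone.I_pow_mul 3⟩, ?_, ?_, hd ▸ hcorner.I_pow_mul m, ?_, ?_⟩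
  · convert hcorner.I_pow_mul 3 using 1
    rw [A15_two_mul, pow_succ, I_sq]
    linear_combination ((2 : ℂ) ^ (m - 1) - 1) * I_sq
  · convert minNormRep_neg_one_add_two_pow (by omega : 2 ≤ m) using 1
    rw [B15_two_mul]
    ring
  · rw [B15_two_mul, Nat.mul_div_cancel_left m two_pos]
  · rw [A15_two_mul, B15_two_mul, inv_s15_two_mul, one_add_I_pow_two_mul_sub_one hm,
      show 2 * (2 * m) = 2 * m * 2 by ring, pow_mul, one_add_I_pow_two_mul,
      ← mul_pow_sub_one hm (2 : ℂ)]
    linear_combination (-4 * ((2 : ℂ) ^ (m - 1)) ^ 2 * I ^ m) * s15_two_mul_mul_I_pow m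
      + (I ^ m * (2 ^ (m - 1) + ((2 : ℂ) ^ (m - 1)) ^ 2)) * I_sq
end
end
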